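/- Entropy version of the Fano inequality: under the hypotheses of the relational Fano inequality (finite Markov chain X → Y → X̂, relation R, event E = {(X, X̂) ∈ R}, and p_min ≤ inf_{x̂} P((X,x̂) ∈ R), p_max ≥ sup_{x̂} P((X,x̂) ∈ R) with 0 ≤ p_min < 1, 0 < p_max ≤ 1), the conditional entropy satisfies H(X | X̂) ≤ H(X) + log p_max + h(P(¬E)) + P(¬E) log((1 - p_min)/p_max). -/
import Mathlib


open Finset

open Classical in
noncomputable def pr {Ω : Type*} [Fintype Ω] (μ : Ω → ℝ) (p : Ω → Prop) : ℝ :=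
  ∑ ω ∈ Finset.univ.filter p, μ ω

def IsPMF {Ω : Type*} [Fintype Ω] (μ : Ω → ℝ) : Prop :=
  (∀ ω, 0 ≤ μ ω) ∧ ∑ ω, μ ω = 1

noncomputable def mutInfo {Ω A B : Type*} [Fintype Ω] [Fintype A] [Fintype B]
    (μ : Ω → ℝ) (X : Ω → A) (Y : Ω → B) : ℝ :=
  ∑ a : A, ∑ b : B, pr μ (fun ω => X ω = a ∧ Y ω = b) *
    Real.log (pr μ (fun ω => X ω = a ∧ Y ω = b) /
      (pr μ (fun ω => X ω = a) * pr μ (fun ω => Y ω = b)))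

noncomputable def ent {Ω A : Type*} [Fintype Ω] [Fintype A] (μ : Ω → ℝ) (X : Ω → A) : ℝ :=
  -∑ a : A, pr μ (fun ω => X ω = a) * Real.log (pr μ (fun ω => X ω = a))

noncomputable def condEnt {Ω A B : Type*} [Fintype Ω] [Fintype A] [Fintype B]
    (μ : Ω → ℝ) (X : Ω → A) (Y : Ω → B) : ℝ :=
  ent μ (fun ω => (X ω, Y ω)) - ent μ Y

noncomputable def binEnt (p : ℝ) : ℝ :=
  -(p * Real.log p) - (1 - p) * Real.log (1 - p)

/-- `X → Y → Z` is a Markov chain: `X` and `Z` are conditionally independent given `Y`. -/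
def MarkovChain {Ω A B C : Type*} [Fintype Ω]
    (μ : Ω → ℝ) (X : Ω → A) (Y : Ω → B) (Z : Ω → C) : Prop :=
  ∀ (a : A) (b : B) (c : C),
    pr μ (fun ω => X ω = a ∧ Y ω = b ∧ Z ω = c) * pr μ (fun ω => Y ω = b) =
      pr μ (fun ω => X ω = a ∧ Y ω = b) * pr μ (fun ω => Y ω = b ∧ Z ω = c)

section FanoHelpers
open Classical
variable {Ω : Type*} [Fintype Ω] {μ : Ω → ℝ}

lemma pr_eq_sum_ite' (p : Ω → Prop) : pr μ p = ∑ ω, if p ω then μ ω else 0 := by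
  rw [pr, Finset.sum_filter]

lemma pr_congr' {p q : Ω → Prop} (h : ∀ ω, p ω ↔ q ω) : pr μ p = pr μ q := by
  simp only [pr_eq_sum_ite']
  exact Finset.sum_congr rfl fun ω _ => by rw [h ω]

lemma pr_nonneg' (h : ∀ ω, 0 ≤ μ ω) (p : Ω → Prop) : 0 ≤ pr μ p := by
  rw [pr_eq_sum_ite']
  exact Finset.sum_nonneg fun ω _ => by split <;> simp [h ω]

lemma sum_pr_fiber' {A : Type*} [Fintype A] (X : Ω → A) (p : Ω → Prop) :
    ∑ a, pr μ (fun ω => p ω ∧ X ω = a) = pr μ p := by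
  simp only [pr_eq_sum_ite']
  rw [Finset.sum_comm]
  refine Finset.sum_congr rfl fun ω _ => ?_
  by_cases hp : p ω <;> simp [hp]

lemma pr_mem_finset' {A : Type*} [Fintype A] (F : Ω → A) (s : Finset A) :
    ∑ x ∈ s, pr μ (fun ω => F ω = x) = pr μ (fun ω => F ω ∈ s) := by
  simp only [pr_eq_sum_ite']
  rw [Finset.sum_comm]
  refine Finset.sum_congr rfl fun ω _ => ?_
  simp [Finset.sum_ite_eq s (F ω) (fun _ => μ ω)]

lemma mul_log_div_expand' {x c : ℝ} (hx : 0 ≤ x) (hc : 0 < c) :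
    x * Real.log (x / c) = x * Real.log x - x * Real.log c := by
  rcases eq_or_lt_of_le hx with h | h
  · simp [← h]
  · rw [Real.log_div (ne_of_gt h) (ne_of_gt hc)]; ring

lemma mul_log_div_mono' {x q q' : ℝ} (hx : 0 ≤ x) (hq' : 0 < q') (hle : q ≤ q')
    (h : 0 < q ∨ x = 0) : x * Real.log (x / q') ≤ x * Real.log (x / q) := by
  rcases h with hq | rfl'
  · rcases eq_or_lt_of_le hx with h | h
    · simp [← h]
    · apply mul_le_mul_of_nonneg_left _ hx
      exact Real.log_le_log (div_pos h hq') (div_le_div_of_nonneg_left h.le hq hle)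
  · simp [rfl']

/-- Log-sum inequality. -/
lemma log_sum_ineq' {ι : Type*} (s : Finset ι) (a b : ι → ℝ)
    (ha : ∀ i ∈ s, 0 ≤ a i) (hb : ∀ i ∈ s, 0 ≤ b i)
    (hab : ∀ i ∈ s, b i = 0 → a i = 0) :
    (∑ i ∈ s, a i) * Real.log ((∑ i ∈ s, a i) / (∑ i ∈ s, b i)) ≤
      ∑ i ∈ s, a i * Real.log (a i / b i) := by
  set S := ∑ i ∈ s, a i with hS
  set T := ∑ i ∈ s, b i with hT
  have hS0 : 0 ≤ S := Finset.sum_nonneg ha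
  have hT0 : 0 ≤ T := Finset.sum_nonneg hb
  rcases eq_or_lt_of_le hT0 with hT' | hT'
  · have hb0 : ∀ i ∈ s, b i = 0 := by
      intro i hi
      exact le_antisymm ((Finset.single_le_sum hb hi).trans hT'.symm.le) (hb i hi)
    have ha0 : ∀ i ∈ s, a i = 0 := fun i hi => hab i hi (hb0 i hi)
    have h1 : S = 0 := Finset.sum_eq_zero ha0
    rw [h1, Finset.sum_eq_zero (fun i hi => by rw [ha0 i hi]; ring)]
    simp
  rcases eq_or_lt_of_le hS0 with hS' | hS'
  · have ha0 : ∀ i ∈ s, a i = 0 := (Finset.sum_eq_zero_iff_of_nonneg ha).mp hS'.symm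
    rw [← hS', Finset.sum_eq_zero (fun i hi => by rw [ha0 i hi]; ring)]
    simp
  · have key : ∀ i ∈ s,
        a i * Real.log (S / T) + a i - b i * (S / T) ≤ a i * Real.log (a i / b i) := by
      intro i hi
      rcases eq_or_lt_of_le (ha i hi) with h0 | h0
      · rw [← h0]
        have : 0 ≤ b i * (S / T) := mul_nonneg (hb i hi) (div_nonneg hS0 hT0)
        simp; linarith
      · have hbi : 0 < b i := by
          rcases eq_or_lt_of_le (hb i hi) with h | h
          · exact absurd (hab i hi h.symm) (ne_of_gt h0)
          · exact h
        have hlog : 1 - (b i * S) / (a i * T) ≤ Real.log (a i * T / (b i * S)) := by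
          have h2 := Real.log_le_sub_one_of_pos (x := (b i * S) / (a i * T)) (by positivity)
          rw [show a i * T / (b i * S) = (b i * S / (a i * T))⁻¹ by rw [inv_div],
            Real.log_inv]
          linarith
        have heq : Real.log (a i * T / (b i * S)) = Real.log (a i / b i) - Real.log (S / T) := by
          rw [Real.log_div (by positivity) (by positivity),
            Real.log_mul (ne_of_gt h0) (ne_of_gt hT'),
            Real.log_mul (ne_of_gt hbi) (ne_of_gt hS'),
            Real.log_div (ne_of_gt h0) (ne_of_gt hbi),
            Real.log_div (ne_of_gt hS') (ne_of_gt hT')]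
          ring
        have h3 := mul_le_mul_of_nonneg_left hlog (le_of_lt h0)
        rw [heq] at h3
        have hsimp : a i * (1 - (b i * S) / (a i * T)) = a i - b i * (S / T) := by
          field_simp
        rw [hsimp] at h3
        linarith
    calc S * Real.log (S / T)
        = ∑ i ∈ s, (a i * Real.log (S / T) + a i - b i * (S / T)) := by
          rw [Finset.sum_sub_distrib, Finset.sum_add_distrib, ← Finset.sum_mul,
            ← Finset.sum_mul, ← hS, ← hT]
          have h4 : T * (S / T) = S := by field_simp
          linarith
      _ ≤ ∑ i ∈ s, a i * Real.log (a i / b i) := Finset.sum_le_sum key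

end FanoHelpers

theorem fano_entropy_version {Ω A B C : Type*} [Fintype Ω] [Fintype A] [Fintype B] [Fintype C]
    [DecidableEq A] [DecidableEq C]
    (μ : Ω → ℝ) (hμ : IsPMF μ) (X : Ω → A) (Y : Ω → B) (Xh : Ω → C)
    (hMC : MarkovChain μ X Y Xh) (R : Finset (A × C))
    (pmin pmax : ℝ) (hmin0 : 0 ≤ pmin) (hmin1 : pmin < 1) (hmax0 : 0 < pmax) (hmax1 : pmax ≤ 1)
    (hmin : ∀ ω₀ : Ω, pmin ≤ pr μ (fun ω => (X ω, Xh ω₀) ∈ R))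
    (hmax : ∀ ω₀ : Ω, pr μ (fun ω => (X ω, Xh ω₀) ∈ R) ≤ pmax) :
    condEnt μ X Xh ≤
      ent μ X + Real.log pmax + binEnt (pr μ (fun ω => (X ω, Xh ω) ∉ R)) +
        pr μ (fun ω => (X ω, Xh ω) ∉ R) * Real.log ((1 - pmin) / pmax) := by
  classical
  obtain ⟨hμ0, hμ1⟩ := hμ
  set pX : A → ℝ := fun a => pr μ (fun ω => X ω = a) with hpX
  set pC : C → ℝ := fun c => pr μ (fun ω => Xh ω = c) with hpC
  set f : A × C → ℝ := fun p => pr μ (fun ω => X ω = p.1 ∧ Xh ω = p.2) with hf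
  have hf0 : ∀ p : A × C, 0 ≤ f p := fun p => pr_nonneg' hμ0 _
  have hpX0 : ∀ a, 0 ≤ pX a := fun a => pr_nonneg' hμ0 _
  have hpC0 : ∀ c, 0 ≤ pC c := fun c => pr_nonneg' hμ0 _
  have hfX : ∀ a, ∑ c, f (a, c) = pX a := fun a => sum_pr_fiber' Xh (fun ω => X ω = a)
  have hfC : ∀ c, ∑ a, f (a, c) = pC c := by
    intro c
    simp only [hf, hpC]
    rw [← sum_pr_fiber' X (fun ω => Xh ω = c)]
    exact Finset.sum_congr rfl fun a _ => pr_congr' fun ω => and_comm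
  have hprTrue : pr μ (fun _ : Ω => True) = 1 := by
    rw [pr_eq_sum_ite']; simpa using hμ1
  have hXsum : ∑ a, pX a = 1 := by
    rw [← hprTrue, ← sum_pr_fiber' X (fun _ => True)]
    exact Finset.sum_congr rfl fun a _ => pr_congr' fun ω => by simp
  have hCsum : ∑ c, pC c = 1 := by
    rw [← hprTrue, ← sum_pr_fiber' Xh (fun _ => True)]
    exact Finset.sum_congr rfl fun c _ => pr_congr' fun ω => by simp
  have hsumf : ∑ p : A × C, f p = 1 := by
    rw [Fintype.sum_prod_type]
    simp only [hfX]
    exact hXsum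
  have hfleX : ∀ p : A × C, f p ≤ pX p.1 := by
    intro p
    rw [← hfX p.1]
    exact Finset.single_le_sum (fun c _ => hf0 (p.1, c)) (Finset.mem_univ p.2)
  have hfleC : ∀ p : A × C, f p ≤ pC p.2 := by
    intro p
    rw [← hfC p.2]
    exact Finset.single_le_sum (fun a _ => hf0 (a, p.2)) (Finset.mem_univ p.1)
  -- chain rule
  have hpair : ∀ p : A × C, pr μ (fun ω => (X ω, Xh ω) = p) = f p := fun p =>
    pr_congr' fun ω => by simp [Prod.ext_iff]
  have hchain : ∑ p : A × C, f p * Real.log (f p / (pX p.1 * pC p.2)) =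
      ent μ X + ent μ Xh - ent μ (fun ω => (X ω, Xh ω)) := by
    have hterm : ∀ p : A × C, f p * Real.log (f p / (pX p.1 * pC p.2)) =
        f p * Real.log (f p) - f p * Real.log (pX p.1) - f p * Real.log (pC p.2) := by
      intro p
      rcases eq_or_lt_of_le (hf0 p) with h | h
      · simp [← h]
      · have hX1 : 0 < pX p.1 := lt_of_lt_of_le h (hfleX p)
        have hC1 : 0 < pC p.2 := lt_of_lt_of_le h (hfleC p)
        rw [Real.log_div (ne_of_gt h) (by positivity),
          Real.log_mul (ne_of_gt hX1) (ne_of_gt hC1)]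
        ring
    simp only [hterm]
    rw [Finset.sum_sub_distrib, Finset.sum_sub_distrib]
    have e1 : ∑ p : A × C, f p * Real.log (f p) = -ent μ (fun ω => (X ω, Xh ω)) := by
      rw [ent, neg_neg]
      exact Finset.sum_congr rfl fun p _ => by rw [hpair p]
    have e2 : ∑ p : A × C, f p * Real.log (pX p.1) = -ent μ X := by
      rw [ent, neg_neg, Fintype.sum_prod_type]
      refine Finset.sum_congr rfl fun a _ => ?_
      show ∑ c : C, f (a, c) * Real.log (pX a) = _
      rw [← Finset.sum_mul, hfX]
    have e3 : ∑ p : A × C, f p * Real.log (pC p.2) = -ent μ Xh := by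
      rw [ent, neg_neg, Fintype.sum_prod_type_right]
      refine Finset.sum_congr rfl fun c _ => ?_
      show ∑ a : A, f (a, c) * Real.log (pC c) = _
      rw [← Finset.sum_mul, hfC]
    rw [e1, e2, e3]
    ring
  -- splitting and log-sum
  set sE : Finset (A × C) := Finset.univ.filter (fun p : A × C => p ∈ R) with hsE
  set sN : Finset (A × C) := Finset.univ.filter (fun p : A × C => p ∉ R) with hsN
  set P : ℝ := ∑ p ∈ sE, f p with hP
  set P' : ℝ := ∑ p ∈ sN, f p with hP'
  set Q : ℝ := ∑ p ∈ sE, pX p.1 * pC p.2 with hQ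
  set Q' : ℝ := ∑ p ∈ sN, pX p.1 * pC p.2 with hQ'
  have hg0 : ∀ p : A × C, 0 ≤ pX p.1 * pC p.2 := fun p => mul_nonneg (hpX0 _) (hpC0 _)
  have hgf : ∀ p : A × C, pX p.1 * pC p.2 = 0 → f p = 0 := by
    intro p hp
    rcases mul_eq_zero.mp hp with h | h
    · exact le_antisymm (by rw [← h]; exact hfleX p) (hf0 p)
    · exact le_antisymm (by rw [← h]; exact hfleC p) (hf0 p)
  have hsplit : P * Real.log (P / Q) + P' * Real.log (P' / Q') ≤
      ∑ p : A × C, f p * Real.log (f p / (pX p.1 * pC p.2)) := by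
    rw [← Finset.sum_filter_add_sum_filter_not Finset.univ (fun p : A × C => p ∈ R)]
    exact add_le_add
      (log_sum_ineq' sE f _ (fun p _ => hf0 p) (fun p _ => hg0 p) (fun p _ => hgf p))
      (log_sum_ineq' sN f _ (fun p _ => hf0 p) (fun p _ => hg0 p) (fun p _ => hgf p))
  have hP0 : 0 ≤ P := Finset.sum_nonneg fun p _ => hf0 p
  have hP'0 : 0 ≤ P' := Finset.sum_nonneg fun p _ => hf0 p
  have hQ0 : 0 ≤ Q := Finset.sum_nonneg fun p _ => hg0 p
  have hQ'0 : 0 ≤ Q' := Finset.sum_nonneg fun p _ => hg0 p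
  have hPsum : P + P' = 1 := by
    rw [hP, hP', hsE, hsN, Finset.sum_filter_add_sum_filter_not]
    exact hsumf
  have hQsum : Q + Q' = 1 := by
    rw [hQ, hQ', hsE, hsN, Finset.sum_filter_add_sum_filter_not]
    rw [Fintype.sum_prod_type]
    simp only [← Finset.mul_sum, hCsum, mul_one]
    exact hXsum
  -- identify P' with pr of not-E
  have hP'pr : P' = pr μ (fun ω => (X ω, Xh ω) ∉ R) := by
    have h1 : P' = ∑ p ∈ sN, pr μ (fun ω => (X ω, Xh ω) = p) :=
      Finset.sum_congr rfl fun p _ => (hpair p).symm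
    rw [h1, pr_mem_finset' (fun ω => (X ω, Xh ω)) sN]
    exact pr_congr' fun ω => by simp [hsN]
  -- bounds on Q
  have hr : ∀ c : C, (∑ a, if (a, c) ∈ R then pX a else 0) =
      pr μ (fun ω => (X ω, c) ∈ R) := by
    intro c
    simp only [hpX]
    have step : ∀ a : A, (if (a, c) ∈ R then pr μ (fun ω => X ω = a) else 0) =
        ∑ ω : Ω, (if X ω = a then (if (a, c) ∈ R then μ ω else 0) else 0) := by
      intro a
      by_cases h : (a, c) ∈ R <;> simp only [h, if_true, if_false, pr_eq_sum_ite']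
      · refine Finset.sum_congr rfl fun ω _ => ?_
        by_cases h2 : X ω = a <;> simp [h2]
      · rw [Finset.sum_eq_zero]
        intro ω _
        simp [h]
    simp only [step]
    rw [pr_eq_sum_ite']
    rw [Finset.sum_comm]
    refine Finset.sum_congr rfl fun ω _ => ?_
    rw [Finset.sum_ite_eq Finset.univ (X ω) (fun a => if (a, c) ∈ R then μ ω else 0)]
    simp
  have hQr : Q = ∑ c, pC c * pr μ (fun ω => (X ω, c) ∈ R) := by
    rw [hQ, hsE, Finset.sum_filter, Fintype.sum_prod_type_right]
    refine Finset.sum_congr rfl fun c _ => ?_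
    show ∑ a : A, (if (a, c) ∈ R then pX a * pC c else 0) = _
    rw [← hr c, Finset.mul_sum]
    refine Finset.sum_congr rfl fun a _ => ?_
    by_cases h : (a, c) ∈ R <;> simp [h, mul_comm]
  have hrange : ∀ c : C, pC c ≠ 0 → ∃ ω₀ : Ω, Xh ω₀ = c := by
    intro c hc
    rw [hpC] at hc
    simp only [pr_eq_sum_ite'] at hc
    obtain ⟨ω, -, hω⟩ := Finset.exists_ne_zero_of_sum_ne_zero hc
    by_cases h : Xh ω = c
    · exact ⟨ω, h⟩
    · simp [h] at hω
  have hQub : Q ≤ pmax := by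
    rw [hQr]
    calc ∑ c, pC c * pr μ (fun ω => (X ω, c) ∈ R) ≤ ∑ c, pC c * pmax := by
          refine Finset.sum_le_sum fun c _ => ?_
          by_cases hc : pC c = 0
          · simp [hc]
          · obtain ⟨ω₀, rfl⟩ := hrange c hc
            exact mul_le_mul_of_nonneg_left (hmax ω₀) (hpC0 _)
      _ = pmax := by rw [← Finset.sum_mul, hCsum, one_mul]
  have hQlb : pmin ≤ Q := by
    rw [hQr]
    calc pmin = ∑ c, pC c * pmin := by rw [← Finset.sum_mul, hCsum, one_mul]
      _ ≤ ∑ c, pC c * pr μ (fun ω => (X ω, c) ∈ R) := by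
          refine Finset.sum_le_sum fun c _ => ?_
          by_cases hc : pC c = 0
          · simp [hc]
          · obtain ⟨ω₀, rfl⟩ := hrange c hc
            exact mul_le_mul_of_nonneg_left (hmin ω₀) (hpC0 _)
  have hQzero : Q = 0 → P = 0 := by
    intro h
    have : ∀ p ∈ sE, pX p.1 * pC p.2 = 0 :=
      fun p hp => (Finset.sum_eq_zero_iff_of_nonneg (fun p _ => hg0 p)).mp h p hp
    exact Finset.sum_eq_zero fun p hp => hgf p (this p hp)
  have hQ'zero : Q' = 0 → P' = 0 := by
    intro h
    have : ∀ p ∈ sN, pX p.1 * pC p.2 = 0 :=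
      fun p hp => (Finset.sum_eq_zero_iff_of_nonneg (fun p _ => hg0 p)).mp h p hp
    exact Finset.sum_eq_zero fun p hp => hgf p (this p hp)
  -- lower bounds on the two binary terms
  have hb1 : P * Real.log (P / pmax) ≤ P * Real.log (P / Q) := by
    refine mul_log_div_mono' hP0 hmax0 hQub ?_
    rcases eq_or_lt_of_le hQ0 with h | h
    · exact Or.inr (hQzero h.symm)
    · exact Or.inl h
  have hb2 : P' * Real.log (P' / (1 - pmin)) ≤ P' * Real.log (P' / Q') := by
    refine mul_log_div_mono' hP'0 (by linarith) (by linarith) ?_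
    rcases eq_or_lt_of_le hQ'0 with h | h
    · exact Or.inr (hQ'zero h.symm)
    · exact Or.inl h
  -- now put everything together
  have hI : P * Real.log (P / pmax) + P' * Real.log (P' / (1 - pmin)) ≤
      ent μ X + ent μ Xh - ent μ (fun ω => (X ω, Xh ω)) := by
    rw [← hchain]
    calc P * Real.log (P / pmax) + P' * Real.log (P' / (1 - pmin))
        ≤ P * Real.log (P / Q) + P' * Real.log (P' / Q') := add_le_add hb1 hb2
      _ ≤ _ := hsplit
  have hPP' : P = 1 - P' := by linarith
  have hfinal : ent μ X + Real.log pmax + binEnt P' + P' * Real.log ((1 - pmin) / pmax) =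
      ent μ X - (P * Real.log (P / pmax) + P' * Real.log (P' / (1 - pmin))) := by
    rw [binEnt, mul_log_div_expand' hP0 hmax0, mul_log_div_expand' hP'0 (by linarith),
      Real.log_div (by intro h; linarith) (ne_of_gt hmax0), hPP']
    ring
  rw [condEnt, ← hP'pr]
  rw [hfinal]
  linarith
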